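/- Let M~ be the action-visible augmented MDP built from a finite MDP M, a defender state-observation function DObs_S, the user objective φ0 = ¬U0 𝖴 F0 and the attacker objective φ1 = ¬U1 𝖴 F1. Let π~ be a Markov strategy of M~ that is almost-sure winning from (s0, DObs_S(s0)) for ¬U~1 𝖴 F~1, and let π~1 be the finite-memory strategy it induces on M. Then Pr_{s0}(¬U1 𝖴 F1; M_{π~1}) = 1; that is, π~1 is almost-sure winning in M for the attacker's reach-avoid objective. -/

import Mathlib

open scoped BigOperators Classical

/-- A finite Markov decision process: finite state set `S`, finite action set `A`,
nonempty enabled-action sets, an initial state, and a transition kernel that is a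
probability distribution on `S` for every state and enabled action. -/
structure MDP (S A : Type) [Fintype S] [Fintype A] where
  act : S → Finset A
  act_nonempty : ∀ s, (act s).Nonempty
  init : S
  P : S → A → S → ℝ
  P_nonneg : ∀ s a s', 0 ≤ P s a s'
  P_sum_one : ∀ s, ∀ a ∈ act s, (∑ s', P s a s') = 1

variable {S A : Type} [Fintype S] [Fintype A]

/-- `Post(s,a)`: states reachable with positive probability. -/
def post (M : MDP S A) (s : S) (a : A) : Set S := {s' | 0 < M.P s a s'}

/-- The last state of a history `(s, l)` (state `s` followed by action-state steps `l`). -/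
def lastState (s : S) (l : List (A × S)) : S :=
  (l.getLast?.map Prod.snd).getD s

/-- `(s, l)` is a (valid) history of `M`: each action is enabled and each transition
has positive probability. -/
def isHist (M : MDP S A) : S → List (A × S) → Prop
  | _, [] => True
  | s, (a, s') :: rest => a ∈ M.act s ∧ 0 < M.P s a s' ∧ isHist M s' rest

/-- The `i`-th state of the history `(s, l)`. -/
def stateAt (s : S) (l : List (A × S)) : ℕ → S
  | 0 => s
  | i + 1 => ((l[i]?).map Prod.snd).getD s

/-- `Occ(h)`: the set of states occurring in the history `(s, l)`. -/
def occ (s : S) (l : List (A × S)) : Set S :=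
  insert s {t | t ∈ l.map Prod.snd}

/-- The history `(s, l)` satisfies the reach-avoid objective `¬U 𝖴 F`. -/
def satRA (U F : Set S) (s : S) (l : List (A × S)) : Prop :=
  ∃ k ≤ l.length, stateAt s l k ∈ F ∧ ∀ i < k, stateAt s l i ∉ U ∪ F

/-- Probability of the continuation `l` of the history `(s0, pre)` under strategy `π`. -/
noncomputable def prFrom (M : MDP S A) (π : S → List (A × S) → A → ℝ) :
    S → List (A × S) → List (A × S) → ℝ
  | _, _, [] => 1
  | s0, pre, (a, s') :: rest =>
      π s0 pre a * M.P (lastState s0 pre) a s' * prFrom M π s0 (pre ++ [(a, s')]) rest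

/-- `Pr(h; M_π)`: the probability of the history `h = (s, l)` under strategy `π`. -/
noncomputable def prHist (M : MDP S A) (π : S → List (A × S) → A → ℝ)
    (s : S) (l : List (A × S)) : ℝ :=
  prFrom M π s [] l

/-- A (randomized, history-dependent) strategy: maps each history to a probability
distribution over the actions enabled at its last state. -/
structure Strategy (M : MDP S A) where
  toFun : S → List (A × S) → A → ℝ
  nonneg : ∀ s l a, 0 ≤ toFun s l a
  sum_one : ∀ s l, (∑ a, toFun s l a) = 1
  support_mem : ∀ s l a, 0 < toFun s l a → a ∈ M.act (lastState s l)

/-- A (randomized) Markov strategy: maps each state to a probability distribution over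
the actions enabled at that state. -/
structure MarkovStrategy (M : MDP S A) where
  toFun : S → A → ℝ
  nonneg : ∀ s a, 0 ≤ toFun s a
  sum_one : ∀ s, (∑ a, toFun s a) = 1
  support_mem : ∀ s a, 0 < toFun s a → a ∈ M.act s

/-- The history-dependent strategy induced by a Markov strategy. -/
def MarkovStrategy.strat {M : MDP S A} (σ : MarkovStrategy M) : Strategy M where
  toFun s l a := σ.toFun (lastState s l) a
  nonneg s l a := σ.nonneg _ a
  sum_one s l := σ.sum_one _
  support_mem s l a h := σ.support_mem _ a h

/-- Sum of `Pr(h; M_π)` over all histories `h` of length `n` starting at `s` that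
satisfy the reach-avoid objective `¬U 𝖴 F`. -/
noncomputable def satProbN (M : MDP S A) (π : S → List (A × S) → A → ℝ)
    (U F : Set S) (s : S) (n : ℕ) : ℝ :=
  ∑ f : Fin n → A × S,
    if isHist M s (List.ofFn f) ∧ satRA U F s (List.ofFn f)
    then prHist M π s (List.ofFn f) else 0

/-- `Pr_s(¬U 𝖴 F; M_π)`: supremum over `n` of `satProbN`. -/
noncomputable def prSat (M : MDP S A) (π : S → List (A × S) → A → ℝ)
    (U F : Set S) (s : S) : ℝ :=
  ⨆ n : ℕ, satProbN M π U F s n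

/-- The almost-sure winning region `ASW(¬U 𝖴 F)`. -/
def ASW (M : MDP S A) (U F : Set S) : Set S :=
  {s | ∃ π : Strategy M, prSat M π.toFun U F s = 1}

/-- `Allowed(s)`: enabled actions keeping the agent inside `ASW(¬U 𝖴 F)`
(empty for `s ∉ ASW(¬U 𝖴 F)`). -/
def allowed (M : MDP S A) (U F : Set S) (s : S) : Set A :=
  {a | s ∈ ASW M U F ∧ a ∈ M.act s ∧ post M s a ⊆ ASW M U F}

/-- A defender state-observation function: observation-equivalence classes partition the
state space and observation-equivalent states have the same enabled actions. -/
structure ObsFun (M : MDP S A) where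
  obs : S → Set S
  mem_self : ∀ s, s ∈ obs s
  eq_of_mem : ∀ s s', s' ∈ obs s → obs s' = obs s
  act_eq : ∀ s s', s' ∈ obs s → M.act s' = M.act s

/-- Action-visible belief update `Update_v(B, a, s'')`. -/
def updateV (M : MDP S A) (O : ObsFun M) (U0 F0 : Set S)
    (B : Set S) (a : A) (s'' : S) : Set S :=
  {s' | ∃ so ∈ B, a ∈ allowed M U0 F0 so ∧ s' ∈ post M so a ∧ O.obs s' = O.obs s''}

/-- Action-invisible belief update `Update_inv(B, s'')`. -/
def updateInv (M : MDP S A) (O : ObsFun M) (U0 F0 : Set S)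
    (B : Set S) (s'' : S) : Set S :=
  {s' | ∃ so ∈ B, ∃ ao ∈ allowed M U0 F0 so, s' ∈ post M so ao ∧ O.obs s' = O.obs s''}

/-- The unsafe set `U~1 = {(s,B) : s ∈ U1, B ≠ ∅} ∪ {(s,∅) : s ∈ S}` of the
augmented MDP. -/
def augU (U1 : Set S) : Set (S × Set S) :=
  {p | (p.1 ∈ U1 ∧ p.2 ≠ ∅) ∨ p.2 = ∅}

/-- The target set `F~1 = F1 × (2^S \ {∅})` of the augmented MDP. -/
def augF (F1 : Set S) : Set (S × Set S) :=
  {p | p.1 ∈ F1 ∧ p.2 ≠ ∅}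

/-- The action-visible augmented MDP `M~`. -/
noncomputable def augV (M : MDP S A) (O : ObsFun M) (U0 F0 : Set S) :
    MDP (S × Set S) A where
  act p := M.act p.1
  act_nonempty p := M.act_nonempty p.1
  init := (M.init, O.obs M.init)
  P p a q :=
    if p.2.Nonempty ∧ ∃ so ∈ p.2, a ∈ allowed M U0 F0 so then
      (if q.2 = updateV M O U0 F0 p.2 a q.1 then M.P p.1 a q.1 else 0)
    else (if q = (p.1, (∅ : Set S)) then 1 else 0)
  P_nonneg := by
    intro p a q
    split_ifs <;> first | exact M.P_nonneg _ _ _ | norm_num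
  P_sum_one := by
    intro p a ha
    by_cases hc : p.2.Nonempty ∧ ∃ so ∈ p.2, a ∈ allowed M U0 F0 so
    · simp only [if_pos hc]
      rw [Fintype.sum_prod_type]
      have : ∀ t : S,
          (∑ C : Set S, if C = updateV M O U0 F0 p.2 a t then M.P p.1 a t else 0)
            = M.P p.1 a t := by
        intro t
        simp [Finset.sum_ite_eq']
      simp only [this]
      exact M.P_sum_one p.1 a ha
    · simp only [if_neg hc]
      simp [Finset.sum_ite_eq']

/-- The action-invisible augmented MDP `M^`. -/
noncomputable def augInv (M : MDP S A) (O : ObsFun M) (U0 F0 : Set S) :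
    MDP (S × Set S) A where
  act p := M.act p.1
  act_nonempty p := M.act_nonempty p.1
  init := (M.init, O.obs M.init)
  P p a q :=
    if (∃ so ∈ p.2, a ∈ allowed M U0 F0 so) ∧ a ∈ M.act p.1 then
      (if q.2 = updateInv M O U0 F0 p.2 q.1 then M.P p.1 a q.1 else 0)
    else (if q = (p.1, (∅ : Set S)) then 1 else 0)
  P_nonneg := by
    intro p a q
    split_ifs <;> first | exact M.P_nonneg _ _ _ | norm_num
  P_sum_one := by
    intro p a ha
    by_cases hc : (∃ so ∈ p.2, a ∈ allowed M U0 F0 so) ∧ a ∈ M.act p.1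
    · simp only [if_pos hc]
      rw [Fintype.sum_prod_type]
      have : ∀ t : S,
          (∑ C : Set S, if C = updateInv M O U0 F0 p.2 t then M.P p.1 a t else 0)
            = M.P p.1 a t := by
        intro t
        simp [Finset.sum_ite_eq']
      simp only [this]
      exact M.P_sum_one p.1 a ha
    · simp only [if_neg hc]
      simp [Finset.sum_ite_eq']

/-- The defender's belief after observing (states and actions of) the history `(s0, l)`,
for an action-visible defender: `B0 = DObs_S(s0)`, `B(i+1) = Update_v(Bi, ai, s(i+1))`. -/
def beliefV (M : MDP S A) (O : ObsFun M) (U0 F0 : Set S)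
    (s0 : S) (l : List (A × S)) : Set S :=
  l.foldl (fun B p => updateV M O U0 F0 B p.1 p.2) (O.obs s0)

/-- The defender's belief after observing (the states of) the history `(s0, l)`,
for an action-invisible defender: `B0 = DObs_S(s0)`, `B(i+1) = Update_inv(Bi, s(i+1))`. -/
def beliefInv (M : MDP S A) (O : ObsFun M) (U0 F0 : Set S)
    (s0 : S) (l : List (A × S)) : Set S :=
  l.foldl (fun B p => updateInv M O U0 F0 B p.2) (O.obs s0)

/-- The finite-memory strategy on `M` induced by a Markov strategy of the action-visible
augmented MDP `M~`. -/
noncomputable def inducedV (M : MDP S A) (O : ObsFun M) (U0 F0 : Set S)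
    (σ : MarkovStrategy (augV M O U0 F0)) : Strategy M where
  toFun s l a := σ.toFun (lastState s l, beliefV M O U0 F0 s l) a
  nonneg s l a := σ.nonneg _ a
  sum_one s l := σ.sum_one _
  support_mem s l a h := σ.support_mem _ a h

/-- The finite-memory strategy on `M` induced by a Markov strategy of the
action-invisible augmented MDP `M^`. -/
noncomputable def inducedInv (M : MDP S A) (O : ObsFun M) (U0 F0 : Set S)
    (σ : MarkovStrategy (augInv M O U0 F0)) : Strategy M where
  toFun s l a := σ.toFun (lastState s l, beliefInv M O U0 F0 s l) a
  nonneg s l a := σ.nonneg _ a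
  sum_one s l := σ.sum_one _
  support_mem s l a h := σ.support_mem _ a h

/-- A ranking witness `(W, r)` for the reach-avoid objective `¬U 𝖴 F`. -/
def rankWitness (M : MDP S A) (U F : Set S) (W : Set S) (r : S → ℕ) : Prop :=
  W ∩ U = ∅ ∧
  ∀ s ∈ W \ F, ∃ a ∈ M.act s, post M s a ⊆ W ∧
    (post M s a ∩ {t ∈ W | r t < r s}).Nonempty

/-!
Along a history of `M`, the belief maintained by `inducedV` is the second component of the
corresponding state of `M~`. While that belief is nonempty, `M~` moves exactly like `M` and
both strategies play the same action distribution; a step that would empty the belief sends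
`M~` into `U~1`. The probability of meeting `¬U 𝖴 F` within `n` steps satisfies a one-step
recursion, so by induction on `n` it is never larger in `M~` than in `M`. Taking suprema, the
value in `M` is at least the value `1` in `M~`.
-/

section PathProbability

variable (M : MDP S A)

noncomputable def pathProb (π : S → List (A × S) → A → ℝ) (s0 : S) (pre : List (A × S))
    (n : ℕ) (Φ : List (A × S) → Prop) : ℝ :=
  ∑ f : Fin n → A × S,
    if isHist M (lastState s0 pre) (List.ofFn f) ∧ Φ (List.ofFn f)
    then prFrom M π s0 pre (List.ofFn f) else 0

variable {M}

lemma lastState_concat {S A : Type} (s : S) (pre : List (A × S)) (a : A) (s' : S) :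
    lastState s (pre ++ [(a, s')]) = s' := by
  simp [lastState]

lemma prFrom_nonneg (π : Strategy M) (s0 : S) :
    ∀ pre l, 0 ≤ prFrom M π.toFun s0 pre l
  | _, [] => zero_le_one
  | _, (a, s') :: l =>
    mul_nonneg (mul_nonneg (π.nonneg _ _ a) (M.P_nonneg _ a s')) (prFrom_nonneg π s0 _ l)

lemma pathProb_nonneg (π : Strategy M) (s0 : S) (pre : List (A × S)) (n : ℕ)
    (Φ : List (A × S) → Prop) : 0 ≤ pathProb M π.toFun s0 pre n Φ :=
  Finset.sum_nonneg fun _ _ => by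
    split_ifs
    exacts [prFrom_nonneg π s0 pre _, le_rfl]

lemma pathProb_mono (π : Strategy M) (s0 : S) (pre : List (A × S)) (n : ℕ)
    {Φ Ψ : List (A × S) → Prop} (h : ∀ l, Φ l → Ψ l) :
    pathProb M π.toFun s0 pre n Φ ≤ pathProb M π.toFun s0 pre n Ψ :=
  Finset.sum_le_sum fun f _ => by
    by_cases hΦ : isHist M (lastState s0 pre) (List.ofFn f) ∧ Φ (List.ofFn f)
    · rw [if_pos hΦ, if_pos ⟨hΦ.1, h _ hΦ.2⟩]
    · rw [if_neg hΦ]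
      split_ifs
      exacts [prFrom_nonneg π s0 pre _, le_rfl]

lemma pathProb_of_forall_not (π : S → List (A × S) → A → ℝ) (s0 : S) (pre : List (A × S))
    (n : ℕ) {Φ : List (A × S) → Prop} (h : ∀ l, ¬ Φ l) :
    pathProb M π s0 pre n Φ = 0 := by
  simp [pathProb, h]

lemma pathProb_zero (π : S → List (A × S) → A → ℝ) (s0 : S) (pre : List (A × S))
    (Φ : List (A × S) → Prop) :
    pathProb M π s0 pre 0 Φ = if Φ [] then 1 else 0 := by
  simp [pathProb, isHist, prFrom]

lemma ite_isHist_cons (π : Strategy M) (s0 : S) (pre : List (A × S)) (a : A) (s' : S)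
    (l : List (A × S)) (p : Prop) :
    (if isHist M (lastState s0 pre) ((a, s') :: l) ∧ p
      then prFrom M π.toFun s0 pre ((a, s') :: l) else 0)
      = π.toFun s0 pre a * (M.P (lastState s0 pre) a s' *
          if isHist M s' l ∧ p then prFrom M π.toFun s0 (pre ++ [(a, s')]) l else 0) := by
  by_cases ha : a ∈ M.act (lastState s0 pre)
  · rcases (M.P_nonneg (lastState s0 pre) a s').lt_or_eq with hP | hP
    · simp only [isHist, prFrom, ha, hP, true_and]
      split_ifs <;> ring
    · simp [isHist, ← hP]
  · have hπ : π.toFun s0 pre a = 0 :=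
      ((π.nonneg s0 pre a).eq_of_not_lt fun h => ha (π.support_mem s0 pre a h)).symm
    simp [isHist, ha, hπ]

lemma sum_strategy_mul_sum_P (π : Strategy M) (s0 : S) (pre : List (A × S)) :
    ∑ a, π.toFun s0 pre a * ∑ s', M.P (lastState s0 pre) a s' = 1 := by
  rw [← π.sum_one s0 pre]
  refine Finset.sum_congr rfl fun a _ => ?_
  rcases (π.nonneg s0 pre a).lt_or_eq with h | h
  · rw [M.P_sum_one _ a (π.support_mem s0 pre a h), mul_one]
  · rw [← h, zero_mul]

lemma pathProb_succ (π : Strategy M) (s0 : S) (pre : List (A × S)) (n : ℕ)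
    (Φ : List (A × S) → Prop) :
    pathProb M π.toFun s0 pre (n + 1) Φ
      = ∑ a, π.toFun s0 pre a * ∑ s', M.P (lastState s0 pre) a s' *
          pathProb M π.toFun s0 (pre ++ [(a, s')]) n (fun l => Φ ((a, s') :: l)) := by
  unfold pathProb
  rw [← (Fin.consEquiv fun _ => A × S).sum_comp, Fintype.sum_prod_type, Fintype.sum_prod_type]
  refine Finset.sum_congr rfl fun a _ => ?_
  rw [Finset.mul_sum]
  refine Finset.sum_congr rfl fun s' _ => ?_
  simp only [Finset.mul_sum, lastState_concat]
  refine Finset.sum_congr rfl fun g _ => ?_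
  rw [show List.ofFn (Fin.consEquiv (fun _ => A × S) ((a, s'), g)) = (a, s') :: List.ofFn g by
    simp [Fin.consEquiv, List.ofFn_succ], ite_isHist_cons]

lemma pathProb_true (π : Strategy M) (s0 : S) (n : ℕ) :
    ∀ pre, pathProb M π.toFun s0 pre n (fun _ => True) = 1 := by
  induction n with
  | zero => simp [pathProb_zero]
  | succ n ih =>
    intro pre
    simp only [pathProb_succ, ih, mul_one]
    exact sum_strategy_mul_sum_P π s0 pre

lemma pathProb_le_one (π : Strategy M) (s0 : S) (pre : List (A × S)) (n : ℕ)
    (Φ : List (A × S) → Prop) : pathProb M π.toFun s0 pre n Φ ≤ 1 :=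
  pathProb_true π s0 n pre ▸ pathProb_mono π s0 pre n fun _ _ => trivial

end PathProbability

section ReachAvoid

lemma stateAt_cons_succ {S A : Type} (s : S) (a : A) (s' : S) {l : List (A × S)} {i : ℕ}
    (hi : i ≤ l.length) : stateAt s ((a, s') :: l) (i + 1) = stateAt s' l i := by
  cases i with
  | zero => rfl
  | succ i => simp [stateAt, List.getElem?_eq_getElem (Nat.lt_of_succ_le hi)]

lemma satRA_nil {S A : Type} {U F : Set S} {s : S} :
    satRA U F s ([] : List (A × S)) ↔ s ∈ F := by
  simp [satRA, stateAt]

lemma satRA_of_mem {S A : Type} {U F : Set S} {s : S} (hs : s ∈ F) (l : List (A × S)) :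
    satRA U F s l :=
  ⟨0, Nat.zero_le _, hs, fun _ h => absurd h (Nat.not_lt_zero _)⟩

lemma not_satRA_of_mem {S A : Type} {U F : Set S} {s : S} (hU : s ∈ U) (hF : s ∉ F)
    (l : List (A × S)) :
    ¬ satRA U F s l := by
  rintro ⟨_ | k, -, hk, hprefix⟩
  · exact hF hk
  · exact hprefix 0 k.succ_pos (Or.inl hU)

lemma satRA_cons_iff {S A : Type} {U F : Set S} {s : S} (hs : s ∉ U ∪ F) (a : A) (s' : S)
    (l : List (A × S)) :
    satRA U F s ((a, s') :: l) ↔ satRA U F s' l := by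
  constructor
  · rintro ⟨_ | k, hk, hF, hprefix⟩
    · exact absurd (Or.inr hF) hs
    · have hk : k ≤ l.length := Nat.le_of_succ_le_succ hk
      refine ⟨k, hk, stateAt_cons_succ s a s' hk ▸ hF, fun i hi => ?_⟩
      rw [← stateAt_cons_succ s a s' (hi.le.trans hk)]
      exact hprefix (i + 1) (Nat.succ_lt_succ hi)
  · rintro ⟨k, hk, hF, hprefix⟩
    refine ⟨k + 1, Nat.succ_le_succ hk, (stateAt_cons_succ s a s' hk).symm ▸ hF, ?_⟩
    rintro (_ | i) hi
    · exact hs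
    · have hi : i < k := Nat.lt_of_succ_lt_succ hi
      rw [stateAt_cons_succ s a s' (hi.le.trans hk)]
      exact hprefix i hi

variable (M : MDP S A)

/-- `satProbN M π U F s n` is `satProbFrom M π U F s [] n` by definition. -/
noncomputable def satProbFrom (π : S → List (A × S) → A → ℝ) (U F : Set S) (s0 : S)
    (pre : List (A × S)) (n : ℕ) : ℝ :=
  pathProb M π s0 pre n (satRA U F (lastState s0 pre))

variable {M} {U F : Set S} (s0 : S) (pre : List (A × S))

lemma satProbFrom_of_mem (π : Strategy M) (n : ℕ) (h : lastState s0 pre ∈ F) :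
    satProbFrom M π.toFun U F s0 pre n = 1 := by
  have hsat : satRA (A := A) U F (lastState s0 pre) = fun _ => True :=
    funext fun l => eq_true (satRA_of_mem h l)
  rw [satProbFrom, hsat, pathProb_true]

lemma satProbFrom_of_mem_of_not_mem (π : S → List (A × S) → A → ℝ) (n : ℕ)
    (hU : lastState s0 pre ∈ U) (hF : lastState s0 pre ∉ F) :
    satProbFrom M π U F s0 pre n = 0 :=
  pathProb_of_forall_not π s0 pre n (not_satRA_of_mem hU hF)

lemma satProbFrom_zero (π : S → List (A × S) → A → ℝ) (hF : lastState s0 pre ∉ F) :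
    satProbFrom M π U F s0 pre 0 = 0 := by
  simp [satProbFrom, pathProb_zero, satRA_nil, hF]

lemma satProbFrom_succ (π : Strategy M) (n : ℕ) (hs : lastState s0 pre ∉ U ∪ F) :
    satProbFrom M π.toFun U F s0 pre (n + 1)
      = ∑ a, π.toFun s0 pre a * ∑ s', M.P (lastState s0 pre) a s' *
          satProbFrom M π.toFun U F s0 (pre ++ [(a, s')]) n := by
  simp only [satProbFrom, pathProb_succ, satRA_cons_iff hs, lastState_concat]

end ReachAvoid

section AugmentedMDP

variable (M : MDP S A) (O : ObsFun M) (U0 F0 : Set S)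

lemma beliefV_concat (s0 : S) (pre : List (A × S)) (a : A) (s' : S) :
    beliefV M O U0 F0 s0 (pre ++ [(a, s')])
      = updateV M O U0 F0 (beliefV M O U0 F0 s0 pre) a s' :=
  List.foldl_concat ..

lemma sum_augV_P_mul_le {s : S} {B : Set S} {a : A} {X : S × Set S → ℝ} {Y : S → ℝ}
    (hXY : ∀ s', X (s', updateV M O U0 F0 B a s') ≤ Y s') (hX : X (s, ∅) ≤ 0)
    (hY : ∀ s', 0 ≤ Y s') :
    ∑ q, (augV M O U0 F0).P (s, B) a q * X q ≤ ∑ s', M.P s a s' * Y s' := by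
  by_cases h : B.Nonempty ∧ ∃ so ∈ B, a ∈ allowed M U0 F0 so
  · calc ∑ q, (augV M O U0 F0).P (s, B) a q * X q
        = ∑ s', M.P s a s' * X (s', updateV M O U0 F0 B a s') := by
          rw [Fintype.sum_prod_type]
          simp [augV, h, ite_mul]
      _ ≤ ∑ s', M.P s a s' * Y s' :=
          Finset.sum_le_sum fun s' _ => mul_le_mul_of_nonneg_left (hXY s') (M.P_nonneg _ _ _)
  · calc ∑ q, (augV M O U0 F0).P (s, B) a q * X q = X (s, ∅) := by
          simp [augV, h, ite_mul]
      _ ≤ ∑ s', M.P s a s' * Y s' :=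
          hX.trans (Finset.sum_nonneg fun s' _ => mul_nonneg (M.P_nonneg _ _ _) (hY s'))

theorem satProbFrom_augV_le (σ : MarkovStrategy (augV M O U0 F0)) (U1 F1 : Set S) (s0 : S)
    (st0 : S × Set S) : ∀ (n : ℕ) (pre : List (A × S)) (pret : List (A × (S × Set S))),
    lastState st0 pret = (lastState s0 pre, beliefV M O U0 F0 s0 pre) →
    satProbFrom (augV M O U0 F0) σ.strat.toFun (augU U1) (augF F1) st0 pret n
      ≤ satProbFrom M (inducedV M O U0 F0 σ).toFun U1 F1 s0 pre n
  | n, pre, pret, hlast => by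
    by_cases hF : lastState st0 pret ∈ augF F1
    · rw [satProbFrom_of_mem s0 pre _ n (by rw [hlast] at hF; exact hF.1)]
      exact pathProb_le_one _ _ _ _ _
    by_cases hU : lastState st0 pret ∈ augU U1
    · rw [satProbFrom_of_mem_of_not_mem st0 pret _ n hU hF]
      exact pathProb_nonneg _ _ _ _ _
    cases n with
    | zero =>
      rw [satProbFrom_zero st0 pret _ hF]
      exact pathProb_nonneg _ _ _ _ _
    | succ n =>
      have hs : lastState s0 pre ∉ U1 ∪ F1 := by
        rw [hlast] at hF hU
        have hB : beliefV M O U0 F0 s0 pre ≠ ∅ := fun h => hU (Or.inr h)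
        exact fun h => h.elim (fun h => hU (Or.inl ⟨h, hB⟩)) fun h => hF ⟨h, hB⟩
      rw [satProbFrom_succ st0 pret σ.strat n (fun h => h.elim hU hF),
        satProbFrom_succ s0 pre _ n hs, hlast]
      refine Finset.sum_le_sum fun a _ => ?_
      have hπ : σ.strat.toFun st0 pret a = (inducedV M O U0 F0 σ).toFun s0 pre a := by
        simp only [MarkovStrategy.strat, inducedV, hlast]
      rw [hπ]
      refine mul_le_mul_of_nonneg_left (sum_augV_P_mul_le M O U0 F0 (fun s' => ?_) ?_
        fun s' => pathProb_nonneg _ _ _ _ _) ((inducedV M O U0 F0 σ).nonneg _ _ _)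
      · refine satProbFrom_augV_le σ U1 F1 s0 st0 n _ _ ?_
        rw [lastState_concat, lastState_concat, beliefV_concat]
      · refine (satProbFrom_of_mem_of_not_mem _ _ _ n ?_ ?_).le <;>
          simp [lastState_concat, augU, augF]

end AugmentedMDP

theorem inducedV_ASW_general (M : MDP S A) (O : ObsFun M) (U0 F0 U1 F1 : Set S)
    (σ : MarkovStrategy (augV M O U0 F0))
    (hσ : prSat (augV M O U0 F0) σ.strat.toFun (augU U1) (augF F1)
      (M.init, O.obs M.init) = 1) :
    prSat M (inducedV M O U0 F0 σ).toFun U1 F1 M.init = 1 := by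
  have hle : ∀ n, satProbN (augV M O U0 F0) σ.strat.toFun (augU U1) (augF F1)
      (M.init, O.obs M.init) n ≤ satProbN M (inducedV M O U0 F0 σ).toFun U1 F1 M.init n :=
    fun n => satProbFrom_augV_le M O U0 F0 σ U1 F1 M.init _ n [] [] rfl
  have hle_one : ∀ n, satProbN M (inducedV M O U0 F0 σ).toFun U1 F1 M.init n ≤ 1 :=
    fun n => pathProb_le_one (inducedV M O U0 F0 σ) M.init [] n _
  refine le_antisymm (ciSup_le hle_one) ?_
  rw [← hσ]
  exact ciSup_mono ⟨1, Set.forall_mem_range.mpr hle_one⟩ hle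

/-- a Markov strategy of the action-visible augmented MDP `M~` that is
almost-sure winning from `(s0, DObs_S(s0))` for `¬U~1 𝖴 F~1` induces a finite-memory
strategy on `M` that is almost-sure winning from `s0` for `¬U1 𝖴 F1`. -/
theorem inducedV_ASW (M : MDP S A) (O : ObsFun M) (U0 F0 U1 F1 : Set S)
    (h0 : Disjoint U0 F0) (h1 : Disjoint U1 F1)
    (σ : MarkovStrategy (augV M O U0 F0))
    (hσ : prSat (augV M O U0 F0) σ.strat.toFun (augU U1) (augF F1)
      (M.init, O.obs M.init) = 1) :
    prSat M (inducedV M O U0 F0 σ).toFun U1 F1 M.init = 1 :=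
  inducedV_ASW_general M O U0 F0 U1 F1 σ hσ
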